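/- arXiv:2001.06744 — 4 statements merged into one kernel-verified Lean document; each statement's English description precedes it below -/
import Mathlib

section
/- Let F : ℝⁿ → ℝ be a function whose gradient map ∇F is differentiable at a point η with derivative (Hessian) H : ℝⁿ → ℝⁿ an invertible linear map, let G : ℝⁿ → ℝⁿ be differentiable at η* := ∇F(η) and satisfy G(∇F(x)) = x for all x in a neighborhood of η, and let f : ℝⁿ → ℝ be differentiable at η. Then the gradient of the composite f ∘ G at η* equals H⁻¹ applied to the gradient of f at η. In other words, in a dually flat manifold the natural gradient of f in the primal parametrization η equals the ordinary gradient of f expressed in the dual parametrization η*: ∇̃f(η) = ∇f(η*). -/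
/-!
Differentiating `G ∘ ∇F = id` near `η` shows that `G` has derivative `H⁻¹` at `η*`, so by the
chain rule `∇(f ∘ G)(η*)` is the adjoint of `H⁻¹` applied to `∇f(η)`. Since `H` is the Hessian
of `F`, it is symmetric (Schwarz), hence so is `H⁻¹`, and the adjoint can be dropped.
-/

open Filter Topology InnerProductSpace

section LeftInverse

variable {𝕜 E F : Type*} [NontriviallyNormedField 𝕜] [NormedAddCommGroup E] [NormedSpace 𝕜 E]
  [NormedAddCommGroup F] [NormedSpace 𝕜 F]

theorem HasFDerivAt.hasFDerivAt_symm_of_eventually_leftInverse {g : E → F} {G : F → E}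
    {H : E ≃L[𝕜] F} {a : E} (hg : HasFDerivAt g (H : E →L[𝕜] F) a)
    (hG : DifferentiableAt 𝕜 G (g a)) (hinv : ∀ᶠ x in 𝓝 a, G (g x) = x) :
    HasFDerivAt G (H.symm : F →L[𝕜] E) (g a) := by
  have hcomp_id : (fderiv 𝕜 G (g a)).comp (H : E →L[𝕜] F) = ContinuousLinearMap.id 𝕜 E :=
    ((hG.hasFDerivAt.comp a hg).congr_of_eventuallyEq (hinv.mono fun _ hx => hx.symm)).unique
      (hasFDerivAt_id a)
  have hfderiv : fderiv 𝕜 G (g a) = H.symm := by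
    ext v
    simpa using congr($hcomp_id (H.symm v))
  exact hfderiv ▸ hG.hasFDerivAt

end LeftInverse

section Gradient

variable {E : Type*} [NormedAddCommGroup E] [InnerProductSpace ℝ E] [CompleteSpace E]

theorem isSymmetric_of_hasFDerivAt_gradient {F : E → ℝ} {gF : E → E} {H : E →L[ℝ] E} {x : E}
    (hF : ∀ y, HasGradientAt F (gF y) y) (hH : HasFDerivAt gF H x) :
    (H : E →ₗ[ℝ] E).IsSymmetric := by
  intro v w
  have hschwarz := second_derivative_symmetric (fun y => (hF y).hasFDerivAt)
    ((toDual ℝ E).toContinuousLinearEquiv.toContinuousLinearMap.hasFDerivAt.comp x hH) v w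
  simpa [real_inner_comm] using hschwarz

theorem HasGradientAt.comp_hasFDerivAt_of_isSymmetric {f : E → ℝ} {G : E → E} {A : E →L[ℝ] E}
    {g y : E} (hf : HasGradientAt f g (G y)) (hG : HasFDerivAt G A y)
    (hA : (A : E →ₗ[ℝ] E).IsSymmetric) : HasGradientAt (f ∘ G) (A g) y := by
  have hdual : (toDual ℝ E g).comp A = toDual ℝ E (A g) := by
    ext v
    simpa using (hA g v).symm
  rw [hasGradientAt_iff_hasFDerivAt, ← hdual]
  exact hf.hasFDerivAt.comp y hG

end Gradient

/-- In a dually flat manifold the natural gradient of `f` in the primal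
parametrization equals the ordinary gradient of `f` in the dual parametrization:
if `gF` is the gradient map of a potential `F`, differentiable at `η` with
invertible derivative (Hessian) `H`, and `G` (the gradient of the dual
potential) inverts `gF` near `η` and is differentiable at `η* = gF η`, then
for `f` differentiable at `η` we have `∇(f ∘ G)(η*) = H⁻¹ (∇f(η))`. -/
theorem natural_gradient_eq_dual_gradient {n : ℕ}
    (F f : EuclideanSpace ℝ (Fin n) → ℝ) (η : EuclideanSpace ℝ (Fin n))
    (gF : EuclideanSpace ℝ (Fin n) → EuclideanSpace ℝ (Fin n))
    (hgF : ∀ x, HasGradientAt F (gF x) x)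
    (H : EuclideanSpace ℝ (Fin n) ≃L[ℝ] EuclideanSpace ℝ (Fin n))
    (hH : HasFDerivAt gF (H : EuclideanSpace ℝ (Fin n) →L[ℝ] EuclideanSpace ℝ (Fin n)) η)
    (G : EuclideanSpace ℝ (Fin n) → EuclideanSpace ℝ (Fin n))
    (hG : G (gF η) = η ∧ ∀ᶠ x in nhds η, G (gF x) = x)
    (hGdiff : DifferentiableAt ℝ G (gF η))
    (hf : DifferentiableAt ℝ f η) :
    gradient (fun y => f (G y)) (gF η) = H.symm (gradient f η) := by
  have hH_symm : (H.toLinearEquiv : _ →ₗ[ℝ] _).IsSymmetric :=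
    fun v w => isSymmetric_of_hasFDerivAt_gradient hgF hH v w
  have hG_deriv := hH.hasFDerivAt_symm_of_eventually_leftInverse hGdiff hG.2
  have hf_grad : HasGradientAt f (gradient f η) (G (gF η)) := by
    rw [hG.1]
    exact hf.hasGradientAt
  exact (hf_grad.comp_hasFDerivAt_of_isSymmetric hG_deriv hH_symm.toLinearMap_symm).gradient
end

section
/- For a finite set X, a statistic T : X → ℝᵗ and θ ∈ ℝᵗ, the Fisher information matrix of the exponential family equals the Hessian of the log-partition function: for all indices i,j, Σ_{x∈X} (∂_i log P_θ(x)) (∂_j log P_θ(x)) P_θ(x) = ∂_i ∂_j F(θ), and both equal the covariance of T under P_θ, namely E_{P_θ}[T_i T_j] − E_{P_θ}[T_i] E_{P_θ}[T_j]. -/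
open scoped RealInnerProductSpace BigOperators

/-!
Writing `P_θ(x) = exp(⟪T x, θ⟫ - F θ)`, one has `∂ᵤ log P_θ(x) = ⟪T x, u⟫ - ∂ᵤF(θ)` and
`∂ᵤ P_θ(x) = P_θ(x) ∂ᵤ log P_θ(x)`. Differentiating `λ` shows `∂ᵤF(θ) = E[⟪T, u⟫]`, and
differentiating an expectation `E_θ[f] = Σₓ f(x) P_θ(x)` gives the covariance `Cov(f, ⟪T, u⟫)`;
applied to `f = ⟪T, v⟫` this computes the Hessian of `F`. The Fisher information is
`E[(⟪T, u⟫ - E⟪T, u⟫)(⟪T, v⟫ - E⟪T, v⟫)]`, the same covariance.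
-/

namespace ExpFamily

variable {X E : Type*} [Fintype X] [NormedAddCommGroup E] [InnerProductSpace ℝ E] (T : X → E)

noncomputable def partitionFn (θ : E) : ℝ := ∑ x, Real.exp ⟪T x, θ⟫

noncomputable def logPartition (θ : E) : ℝ := Real.log (partitionFn T θ)

noncomputable def density (θ : E) (x : X) : ℝ := Real.exp ⟪T x, θ⟫ / partitionFn T θ

noncomputable def mean (θ : E) (f : X → ℝ) : ℝ := ∑ x, f x * density T θ x

noncomputable def covariance (θ : E) (f g : X → ℝ) : ℝ :=
  mean T θ (fun x => f x * g x) - mean T θ f * mean T θ g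

theorem covariance_comm (θ : E) (f g : X → ℝ) : covariance T θ f g = covariance T θ g f := by
  simp only [covariance, mul_comm (f _), mul_comm (mean T θ f)]

theorem hasFDerivAt_partitionFn (θ : E) :
    HasFDerivAt (partitionFn T) (∑ x, Real.exp ⟪T x, θ⟫ • innerSL ℝ (T x)) θ :=
  HasFDerivAt.fun_sum fun x _ => (innerSL ℝ (T x)).hasFDerivAt.exp

variable [Nonempty X]

theorem partitionFn_pos (θ : E) : 0 < partitionFn T θ :=
  Finset.sum_pos (fun _ _ => Real.exp_pos _) Finset.univ_nonempty

theorem sum_density (θ : E) : ∑ x, density T θ x = 1 := by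
  simp only [density, ← Finset.sum_div]
  exact div_self (partitionFn_pos T θ).ne'

theorem density_eq_exp (θ : E) (x : X) :
    density T θ x = Real.exp (⟪T x, θ⟫ - logPartition T θ) := by
  rw [Real.exp_sub, logPartition, Real.exp_log (partitionFn_pos T θ), density]

theorem log_density (θ : E) (x : X) :
    Real.log (density T θ x) = ⟪T x, θ⟫ - logPartition T θ := by
  rw [density_eq_exp, Real.log_exp]

theorem sum_sub_mean_mul_sub_mean (θ : E) (f g : X → ℝ) :
    ∑ x, (f x - mean T θ f) * (g x - mean T θ g) * density T θ x = covariance T θ f g := by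
  have expand : ∀ x, (f x - mean T θ f) * (g x - mean T θ g) * density T θ x
      = f x * g x * density T θ x - mean T θ g * (f x * density T θ x)
        - mean T θ f * (g x * density T θ x) + mean T θ f * mean T θ g * density T θ x :=
    fun x => by ring
  rw [Finset.sum_congr rfl fun x _ => expand x]
  simp only [Finset.sum_add_distrib, Finset.sum_sub_distrib, ← Finset.mul_sum, sum_density]
  unfold covariance mean
  ring

theorem hasFDerivAt_logPartition (θ : E) :
    HasFDerivAt (logPartition T) (∑ x, density T θ x • innerSL ℝ (T x)) θ := by
  refine ((hasFDerivAt_partitionFn T θ).log (partitionFn_pos T θ).ne').congr_fderiv ?_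
  simp only [Finset.smul_sum, smul_smul, density, div_eq_inv_mul]

theorem fderiv_logPartition_apply (θ u : E) :
    fderiv ℝ (logPartition T) θ u = mean T θ (fun x => ⟪T x, u⟫) := by
  simp only [(hasFDerivAt_logPartition T θ).fderiv, sum_apply, smul_apply, innerSL_apply_apply,
    smul_eq_mul, mean, mul_comm]

theorem hasFDerivAt_log_density (θ : E) (x : X) :
    HasFDerivAt (fun θ' => Real.log (density T θ' x))
      (innerSL ℝ (T x) - fderiv ℝ (logPartition T) θ) θ := by
  simp only [log_density]
  exact (innerSL ℝ (T x)).hasFDerivAt.sub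
    (hasFDerivAt_logPartition T θ).differentiableAt.hasFDerivAt

theorem fderiv_log_density_apply (θ u : E) (x : X) :
    fderiv ℝ (fun θ' => Real.log (density T θ' x)) θ u
      = ⟪T x, u⟫ - mean T θ (fun y => ⟪T y, u⟫) := by
  rw [(hasFDerivAt_log_density T θ x).fderiv, sub_apply,
    innerSL_apply_apply, fderiv_logPartition_apply]

theorem hasFDerivAt_density (θ : E) (x : X) :
    HasFDerivAt (fun θ' => density T θ' x)
      (density T θ x • (innerSL ℝ (T x) - fderiv ℝ (logPartition T) θ)) θ := by
  simp only [density_eq_exp]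
  exact ((innerSL ℝ (T x)).hasFDerivAt.sub
    (hasFDerivAt_logPartition T θ).differentiableAt.hasFDerivAt).exp

theorem fderiv_mean_apply (θ u : E) (f : X → ℝ) :
    fderiv ℝ (fun θ' => mean T θ' f) θ u = covariance T θ f (fun x => ⟪T x, u⟫) := by
  have hmean : HasFDerivAt (fun θ' => mean T θ' f)
      (∑ x, f x • density T θ x • (innerSL ℝ (T x) - fderiv ℝ (logPartition T) θ)) θ :=
    HasFDerivAt.fun_sum fun x _ => (hasFDerivAt_density T θ x).const_mul (f x)
  rw [hmean.fderiv]
  simp only [sum_apply, smul_apply, sub_apply, innerSL_apply_apply, fderiv_logPartition_apply,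
    smul_eq_mul, mul_sub, Finset.sum_sub_distrib, covariance, mean, Finset.sum_mul]
  congr 1 <;> exact Finset.sum_congr rfl fun x _ => by ring

theorem fderiv_fderiv_logPartition_apply (θ u v : E) :
    fderiv ℝ (fun θ' => fderiv ℝ (logPartition T) θ' v) θ u
      = covariance T θ (fun x => ⟪T x, u⟫) (fun x => ⟪T x, v⟫) := by
  simp only [fderiv_logPartition_apply, fderiv_mean_apply,
    covariance_comm T θ (fun x => ⟪T x, v⟫)]

theorem sum_fderiv_log_density_mul (θ u v : E) :
    ∑ x, fderiv ℝ (fun θ' => Real.log (density T θ' x)) θ u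
        * fderiv ℝ (fun θ' => Real.log (density T θ' x)) θ v * density T θ x
      = covariance T θ (fun x => ⟪T x, u⟫) (fun x => ⟪T x, v⟫) := by
  simp only [fderiv_log_density_apply, sum_sub_mean_mul_sub_mean]

end ExpFamily

/-- Fisher information of a finite linear exponential family equals the Hessian
of the log-partition function `F(θ) = log Σ_x exp⟨T x, θ⟩`, and both equal the
covariance of the statistic:
`Σ_x ∂ᵢ(log P_θ(x)) ∂ⱼ(log P_θ(x)) P_θ(x) = ∂ᵢ∂ⱼF(θ) = E[TᵢTⱼ] − E[Tᵢ]E[Tⱼ]`. -/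
theorem fisher_information_eq_hessian_log_partition {X : Type*} [Fintype X] [Nonempty X]
    {t : ℕ} (T : X → EuclideanSpace ℝ (Fin t)) (θ : EuclideanSpace ℝ (Fin t))
    (i j : Fin t) :
    -- the exponential family density and log-partition function
    (fun (P : EuclideanSpace ℝ (Fin t) → X → ℝ)
         (F : EuclideanSpace ℝ (Fin t) → ℝ) =>
      (∑ x : X, (fderiv ℝ (fun θ' => Real.log (P θ' x)) θ (EuclideanSpace.single i 1))
          * (fderiv ℝ (fun θ' => Real.log (P θ' x)) θ (EuclideanSpace.single j 1))
          * P θ x)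
        = fderiv ℝ (fun θ' => fderiv ℝ F θ' (EuclideanSpace.single j 1)) θ
            (EuclideanSpace.single i 1) ∧
      fderiv ℝ (fun θ' => fderiv ℝ F θ' (EuclideanSpace.single j 1)) θ
            (EuclideanSpace.single i 1)
        = (∑ x : X, T x i * T x j * P θ x)
            - (∑ x : X, T x i * P θ x) * (∑ x : X, T x j * P θ x))
      (fun θ' x => Real.exp ⟪T x, θ'⟫ / ∑ x' : X, Real.exp ⟪T x', θ'⟫)
      (fun θ' => Real.log (∑ x : X, Real.exp ⟪T x, θ'⟫)) := by
  have inner_single (x : X) (k : Fin t) : ⟪T x, EuclideanSpace.single k 1⟫ = T x k := by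
    simp [EuclideanSpace.inner_single_right]
  have hessian := ExpFamily.fderiv_fderiv_logPartition_apply T θ
    (EuclideanSpace.single i 1) (EuclideanSpace.single j 1)
  refine ⟨(ExpFamily.sum_fderiv_log_density_mul T θ _ _).trans hessian.symm, hessian.trans ?_⟩
  simp only [ExpFamily.covariance, ExpFamily.mean, inner_single]
  rfl
end

section
/- Parametrization of the linear exponential XY family (finite case): let X be a finite set, s ≥ 1, T : X → ℝᵗ and S : Fin s → ℝ^{s−1} statistics such that the s vectors (S(i), 1) ∈ ℝˢ are linearly independent. Then for every ᾱ ∈ ℝ^{s−1} and every family θ̄ : Fin s → ℝᵗ there exist α ∈ ℝ^{s−1} and β : Fin s → ℝᵗ such that for all x ∈ X and y ∈ Fin s: exp(⟨S(y),α⟩ + ⟨T(x), β_y⟩) / λ(α,β) = [ exp(⟨S(y),ᾱ⟩) / Σ_{y'} exp(⟨S(y'),ᾱ⟩) ] · [ exp(⟨T(x), θ̄_y⟩) / Σ_{x'} exp(⟨T(x'), θ̄_y⟩) ], where λ(α,β) = Σ_{x∈X} Σ_{y∈Fin s} exp(⟨S(y),α⟩ + ⟨T(x), β_y⟩). -/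
open scoped RealInnerProductSpace

/-!
Take `β = θbar` and `α = αbar + w`, where the affine function `y ↦ ⟪S y, w⟫ + c` interpolates
`y ↦ -log Z y`, `Z y = ∑ x, exp ⟪T x, θbar y⟫` being the normalizer of the conditional law; such
`w, c` exist because the rows `(S y, 1)` form an invertible matrix. Then the joint weight
`exp (⟪S y, α⟫ + ⟪T x, θbar y⟫)` is a constant multiple of `P(y) P(x | y)`, and normalizing
removes the constant.
-/

lemma exists_inner_add_eq_of_linearIndependent_snoc {m : ℕ}
    (S : Fin (m + 1) → EuclideanSpace ℝ (Fin m))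
    (hS : LinearIndependent ℝ
      (fun i : Fin (m + 1) => (Fin.snoc (fun j => S i j) 1 : Fin (m + 1) → ℝ)))
    (f : Fin (m + 1) → ℝ) :
    ∃ (w : EuclideanSpace ℝ (Fin m)) (c : ℝ), ∀ i, ⟪S i, w⟫ + c = f i := by
  obtain ⟨v, hv⟩ := Matrix.mulVec_surjective_iff_isUnit.mpr
    (Matrix.linearIndependent_rows_iff_isUnit.mp hS) f
  refine ⟨WithLp.toLp 2 (fun j => v j.castSucc), v (Fin.last m), fun i => ?_⟩
  rw [← congrFun hv i]
  simp [Matrix.mulVec, dotProduct, Fin.sum_univ_castSucc, PiLp.inner_apply, mul_comm]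

lemma sum_sum_div_sum_mul_div_sum {X Y : Type*} [Fintype X] [Fintype Y]
    (p : Y → ℝ) (q : Y → X → ℝ) (hp : ∑ y, p y ≠ 0) (hq : ∀ y, ∑ x, q y x ≠ 0) :
    ∑ x, ∑ y, (p y / ∑ y', p y') * (q y x / ∑ x', q y x') = 1 := by
  rw [Finset.sum_comm]
  simp_rw [← Finset.mul_sum, ← Finset.sum_div, div_self (hq _), mul_one]
  rw [← Finset.sum_div, div_self hp]

lemma div_sum_sum_eq_of_eq_mul {X Y : Type*} [Fintype X] [Fintype Y] {f g : X → Y → ℝ} {k : ℝ}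
    (hk : k ≠ 0) (hfg : ∀ x y, f x y = k * g x y) (hg : ∑ x, ∑ y, g x y = 1) (x : X) (y : Y) :
    f x y / ∑ x', ∑ y', f x' y' = g x y := by
  simp_rw [hfg, ← Finset.mul_sum, hg, mul_one]
  exact mul_div_cancel_left₀ _ hk

/-- Parametrization of the linear exponential XY family (finite case): if the
vectors `(S i, 1) ∈ ℝˢ` are linearly independent (here `s = m + 1 ≥ 1`), then
every product-form distribution `P(y)·P(x|y)` with categorical marginal
(statistic `S`, parameter `αbar`) and exponential-family conditionals
(statistic `T`, parameters `θbar y`) is realized by the joint parametrization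
`P_{(α,β)}(x,y) = exp(⟨S y, α⟩ + ⟨T x, β y⟩)/λ(α,β)`. -/
theorem lexyf_parametrization {X : Type*} [Fintype X] [Nonempty X] {t m : ℕ}
    (T : X → EuclideanSpace ℝ (Fin t))
    (S : Fin (m + 1) → EuclideanSpace ℝ (Fin m))
    (hS : LinearIndependent ℝ
      (fun i : Fin (m + 1) => (Fin.snoc (fun j => S i j) 1 : Fin (m + 1) → ℝ)))
    (αbar : EuclideanSpace ℝ (Fin m)) (θbar : Fin (m + 1) → EuclideanSpace ℝ (Fin t)) :
    ∃ (α : EuclideanSpace ℝ (Fin m)) (β : Fin (m + 1) → EuclideanSpace ℝ (Fin t)),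
      ∀ (x : X) (y : Fin (m + 1)),
        Real.exp (⟪S y, α⟫ + ⟪T x, β y⟫)
            / (∑ x' : X, ∑ y' : Fin (m + 1), Real.exp (⟪S y', α⟫ + ⟪T x', β y'⟫))
          = (Real.exp ⟪S y, αbar⟫ / ∑ y' : Fin (m + 1), Real.exp ⟪S y', αbar⟫)
            * (Real.exp ⟪T x, θbar y⟫ / ∑ x' : X, Real.exp ⟪T x', θbar y⟫) := by
  have hA : 0 < ∑ y' : Fin (m + 1), Real.exp ⟪S y', αbar⟫ :=
    Finset.sum_pos (fun _ _ => Real.exp_pos _) Finset.univ_nonempty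
  have hZ : ∀ y, 0 < ∑ x' : X, Real.exp ⟪T x', θbar y⟫ := fun y =>
    Finset.sum_pos (fun _ _ => Real.exp_pos _) Finset.univ_nonempty
  obtain ⟨w, c, hw⟩ := exists_inner_add_eq_of_linearIndependent_snoc S hS
    (fun y => -Real.log (∑ x' : X, Real.exp ⟪T x', θbar y⟫))
  refine ⟨αbar + w, θbar, div_sum_sum_eq_of_eq_mul
    (k := Real.exp (-c) * ∑ y' : Fin (m + 1), Real.exp ⟪S y', αbar⟫) (by positivity)
    (fun x y => ?_) (sum_sum_div_sum_mul_div_sum _ _ hA.ne' fun y => (hZ y).ne')⟩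
  have hα : ⟪S y, αbar + w⟫
      = ⟪S y, αbar⟫ + -c + -Real.log (∑ x' : X, Real.exp ⟪T x', θbar y⟫) := by
    rw [inner_add_right, ← hw y]
    ring
  rw [hα, Real.exp_add, Real.exp_add, Real.exp_add, Real.exp_neg (Real.log _),
    Real.exp_log (hZ y)]
  field_simp
end

section
/- Diagonal form of the α*-block of the dual-coordinate gradient (overparametrized statistic): let X be a finite set, T : X → ℝᵗ, s ≥ 1, x ∈ X, and consider the function h_i(a, β*) = log a_i + ⟨T(x), θ_i⟩ − log Σ_{x'∈X} exp(⟨T(x'), θ_i⟩) with θ_i = β*_i / a_i, defined for a ∈ (ℝ_{>0})ˢ and β* : Fin s → ℝᵗ. Then ∂h_i/∂a_j = 0 for j ≠ i, and ∂h_i/∂a_i = d_i(x) := (1 − ⟨θ_i, T(x) − E_{θ_i}[T]⟩)/a_i, where E_{θ}[T] = Σ_{x'} T(x') exp(⟨T(x'),θ⟩)/Σ_{x'} exp(⟨T(x'),θ⟩). Note T(x) − E_{θ_i}[T] = ∇_{θ_i} log P_{θ_i}(x), so d_i(x) = (1 − ⟨θ_i, ∇_{θ_i} log P_{θ_i}(x)⟩)/P(Y=i).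 -/
/-! The log-density `log P_θ(x) = ⟪T x, θ⟫ - log Z(θ)` has gradient `T x - E_θ[T]`, because the
gradient of the log-partition function `log Z` is the mean of `T`. The function `h i` depends on
`a` only through `a i`, as `log (a i) + log P_θ(x)` at `θ = (a i)⁻¹ • β* i`; the chain rule along
`r ↦ r⁻¹ • β* i`, whose velocity at `a i` is `-θ i / a i`, gives
`1 / a i - ⟪θ i, T x - E_{θ i}[T]⟫ / a i`. -/

open scoped RealInnerProductSpace

open Real InnerProductSpace

section ExpFamily

variable {X E : Type*} [Fintype X] [NormedAddCommGroup E] [InnerProductSpace ℝ E]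

noncomputable def logPartition (T : X → E) (θ : E) : ℝ :=
  log (∑ x' : X, exp ⟪T x', θ⟫)

noncomputable def expFamilyMean (T : X → E) (θ : E) : E :=
  ∑ x' : X, (exp ⟪T x', θ⟫ / ∑ x'' : X, exp ⟪T x'', θ⟫) • T x'

variable [Nonempty X]

theorem sum_exp_inner_pos (T : X → E) (θ : E) : 0 < ∑ x' : X, exp ⟪T x', θ⟫ :=
  Finset.sum_pos (fun _ _ => exp_pos _) Finset.univ_nonempty

theorem log_exp_inner_div_sum_exp_inner (T : X → E) (x : X) (θ : E) :
    log (exp ⟪T x, θ⟫ / ∑ x' : X, exp ⟪T x', θ⟫) = ⟪T x, θ⟫ - logPartition T θ := by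
  rw [log_div (exp_ne_zero _) (sum_exp_inner_pos T θ).ne', log_exp, logPartition]

variable [CompleteSpace E]

theorem hasGradientAt_logPartition (T : X → E) (θ : E) :
    HasGradientAt (logPartition T) (expFamilyMean T θ) θ := by
  rw [hasGradientAt_iff_hasFDerivAt]
  have hZ : HasFDerivAt (fun θ => ∑ x' : X, exp ⟪T x', θ⟫)
      (∑ x' : X, exp ⟪T x', θ⟫ • innerSL ℝ (T x')) θ :=
    HasFDerivAt.fun_sum fun x' _ => (innerSL ℝ (T x')).hasFDerivAt.exp
  refine (hZ.log (sum_exp_inner_pos T θ).ne').congr_fderiv ?_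
  ext y
  simp [expFamilyMean, Finset.smul_sum, div_eq_inv_mul, mul_assoc, real_inner_comm]

theorem hasGradientAt_inner_sub_logPartition (T : X → E) (x : X) (θ : E) :
    HasGradientAt (fun θ => ⟪T x, θ⟫ - logPartition T θ) (T x - expFamilyMean T θ) θ := by
  rw [hasGradientAt_iff_hasFDerivAt, map_sub]
  exact (toDual ℝ E (T x)).hasFDerivAt.sub
    (hasGradientAt_iff_hasFDerivAt.mp (hasGradientAt_logPartition T θ))

theorem hasDerivAt_log_add_inner_inv_smul_sub_logPartition (T : X → E) (x : X) (β : E)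
    {r : ℝ} (hr : r ≠ 0) :
    HasDerivAt (fun r => log r + ⟪T x, r⁻¹ • β⟫ - logPartition T (r⁻¹ • β))
      ((1 - ⟪r⁻¹ • β, T x - expFamilyMean T (r⁻¹ • β)⟫) / r) r := by
  have hθ : HasDerivAt (fun r : ℝ => r⁻¹ • β) (-(r ^ 2)⁻¹ • β) r :=
    (hasDerivAt_inv hr).smul_const β
  have hℓ := (hasGradientAt_iff_hasFDerivAt.mp
    (hasGradientAt_inner_sub_logPartition T x (r⁻¹ • β))).comp_hasDerivAt r hθ
  simp only [add_sub_assoc]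
  refine ((hasDerivAt_log hr).add hℓ).congr_deriv ?_
  rw [toDual_apply_apply, real_inner_smul_right, real_inner_smul_left, real_inner_comm]
  field_simp
  ring

end ExpFamily

theorem dsngd_alpha_block_diagonal_general {X : Type*} [Fintype X] [Nonempty X]
    {t s : ℕ} (T : X → EuclideanSpace ℝ (Fin t)) (x : X)
    (a : Fin s → ℝ) (ha : ∀ k, 0 < a k)
    (βs : Fin s → EuclideanSpace ℝ (Fin t))
    (h : Fin s → (Fin s → ℝ) → (Fin s → EuclideanSpace ℝ (Fin t)) → ℝ)
    (hh : h = fun i a' b => Real.log (a' i) + ⟪T x, (a' i)⁻¹ • b i⟫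
      - Real.log (∑ x' : X, Real.exp ⟪T x', (a' i)⁻¹ • b i⟫))
    (i : Fin s)
    (θi : EuclideanSpace ℝ (Fin t)) (hθi : θi = (a i)⁻¹ • βs i)
    (Eθ : EuclideanSpace ℝ (Fin t))
    (hEθ : Eθ = ∑ x' : X,
      (Real.exp ⟪T x', θi⟫ / ∑ x'' : X, Real.exp ⟪T x'', θi⟫) • T x') :
    (∀ j : Fin s, j ≠ i →
      HasDerivAt (fun r => h i (Function.update a j r) βs) 0 (a j)) ∧
    HasDerivAt (fun r => h i (Function.update a i r) βs)
      ((1 - ⟪θi, T x - Eθ⟫) / a i) (a i) ∧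
    HasGradientAt
      (fun θ => Real.log (Real.exp ⟪T x, θ⟫ / ∑ x' : X, Real.exp ⟪T x', θ⟫))
      (T x - Eθ) θi := by
  subst hh hθi hEθ
  refine ⟨fun j hj => ?_, ?_, ?_⟩
  · simp only [Function.update_of_ne hj.symm]
    exact hasDerivAt_const _ _
  · simp only [Function.update_self]
    exact hasDerivAt_log_add_inner_inv_smul_sub_logPartition T x (βs i) (ha i).ne'
  · simp only [log_exp_inner_div_sum_exp_inner]
    exact hasGradientAt_inner_sub_logPartition T x _

/-- Diagonal form of the `α*`-block of the dual-coordinate gradient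
(overparametrized statistic): for
`h i a β* = log (a i) + ⟨T x, θ i⟩ − log Σ_{x'} exp⟨T x', θ i⟩` with
`θ i = (a i)⁻¹ • β* i`, one has `∂(h i)/∂(a j) = 0` for `j ≠ i`, while
`∂(h i)/∂(a i) = d i = (1 − ⟨θ i, T x − E_{θ i}[T]⟩)/(a i)`; moreover
`T x − E_{θ i}[T] = ∇_θ log P_θ(x)` at `θ = θ i`. -/
theorem dsngd_alpha_block_diagonal {X : Type*} [Fintype X] [Nonempty X]
    {t s : ℕ} (hs : 1 ≤ s) (T : X → EuclideanSpace ℝ (Fin t)) (x : X)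
    (a : Fin s → ℝ) (ha : ∀ k, 0 < a k)
    (βs : Fin s → EuclideanSpace ℝ (Fin t))
    (h : Fin s → (Fin s → ℝ) → (Fin s → EuclideanSpace ℝ (Fin t)) → ℝ)
    (hh : h = fun i a' b => Real.log (a' i) + ⟪T x, (a' i)⁻¹ • b i⟫
      - Real.log (∑ x' : X, Real.exp ⟪T x', (a' i)⁻¹ • b i⟫))
    (i : Fin s)
    (θi : EuclideanSpace ℝ (Fin t)) (hθi : θi = (a i)⁻¹ • βs i)
    (Eθ : EuclideanSpace ℝ (Fin t))
    (hEθ : Eθ = ∑ x' : X,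
      (Real.exp ⟪T x', θi⟫ / ∑ x'' : X, Real.exp ⟪T x'', θi⟫) • T x') :
    (∀ j : Fin s, j ≠ i →
      HasDerivAt (fun r => h i (Function.update a j r) βs) 0 (a j)) ∧
    HasDerivAt (fun r => h i (Function.update a i r) βs)
      ((1 - ⟪θi, T x - Eθ⟫) / a i) (a i) ∧
    HasGradientAt
      (fun θ => Real.log (Real.exp ⟪T x, θ⟫ / ∑ x' : X, Real.exp ⟪T x', θ⟫))
      (T x - Eθ) θi :=
  dsngd_alpha_block_diagonal_general T x a ha βs h hh i θi hθi Eθ hEθ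
end
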